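/- Let k be a nonnegative integer, Γ a subgroup of finite index in SL(2,ℤ), and v a multiplier system for Γ. If F ∈ {Γ, −k, v}, i.e., F is holomorphic on ℍ and satisfies F(Mz) = v(M)(cz+d)^{−k}F(z) for all M = (a b; c d) ∈ Γ, then F^{(k+1)} ∈ {Γ, k+2, v}, i.e., F^{(k+1)}(Mz) = v(M)(cz+d)^{k+2}F^{(k+1)}(z) for all M ∈ Γ and z ∈ ℍ. -/

import Mathlib

open Complex ComplexConjugate

noncomputable section

abbrev SL2Z := Matrix.SpecialLinearGroup (Fin 2) ℤ

/-- The (i,j) entry of an element of SL(2,ℤ). -/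
def entry (M : SL2Z) (i j : Fin 2) : ℤ := (M : Matrix (Fin 2) (Fin 2) ℤ) i j

/-- The argument of a complex number, normalized to lie in [-π, π). -/
def parg (w : ℂ) : ℝ := if Complex.arg w = Real.pi then -Real.pi else Complex.arg w

/-- The principal power `w^k = |w|^k e^{i k arg w}`, with `-π ≤ arg w < π`. -/
def ppow (w : ℂ) (k : ℝ) : ℂ :=
  ((‖w‖ ^ k : ℝ) : ℂ) * Complex.exp (Complex.I * (k : ℂ) * (parg w : ℂ))

/-- `cz + d`, for the bottom row (c, d) of M. -/
def denom (M : SL2Z) (z : ℂ) : ℂ := (entry M 1 0 : ℂ) * z + (entry M 1 1 : ℂ)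

/-- The Möbius action `Mz = (az+b)/(cz+d)`. -/
def moeb (M : SL2Z) (z : ℂ) : ℂ :=
  ((entry M 0 0 : ℂ) * z + (entry M 0 1 : ℂ)) / denom M z

/-- `μ(V) = a² + b² + c² + d²`. -/
def muSL (M : SL2Z) : ℤ :=
  (entry M 0 0) ^ 2 + (entry M 0 1) ^ 2 + (entry M 1 0) ^ 2 + (entry M 1 1) ^ 2

/-- A multiplier system of weight `k` for `Γ`: nonvanishing and the consistency condition
`v(M₁M₂)(c₃z+d₃)^k = v(M₁)v(M₂)(c₁M₂z+d₁)^k(c₂z+d₂)^k` on the upper half-plane. -/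
def IsMultiplier (Γ : Subgroup SL2Z) (k : ℝ) (v : Γ → ℂ) : Prop :=
  (∀ M : Γ, v M ≠ 0) ∧
  ∀ M₁ M₂ : Γ, ∀ z : ℂ, 0 < z.im →
    v (M₁ * M₂) * ppow (denom ((M₁ * M₂ : Γ) : SL2Z) z) k =
      v M₁ * v M₂ * ppow (denom (M₁ : SL2Z) (moeb (M₂ : SL2Z) z)) k *
        ppow (denom (M₂ : SL2Z) z) k

/-- A parabolic element of SL(2,ℤ): trace ±2 and not ±I. -/
def IsParabolicMat (M : SL2Z) : Prop :=
  (Matrix.trace (M : Matrix (Fin 2) (Fin 2) ℤ) = 2 ∨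
    Matrix.trace (M : Matrix (Fin 2) (Fin 2) ℤ) = -2) ∧
  (M : Matrix (Fin 2) (Fin 2) ℤ) ≠ 1 ∧ (M : Matrix (Fin 2) (Fin 2) ℤ) ≠ -1

/-- `v` is weakly parabolic: `|v(P)| = 1` for all parabolic `P ∈ Γ`. -/
def WeaklyParabolic (Γ : Subgroup SL2Z) (v : Γ → ℂ) : Prop :=
  ∀ M : Γ, IsParabolicMat (M : SL2Z) → ‖v M‖ = 1

/-- The weight `−k` stroke operator: `(F∣_v^{-k}M)(z) = v(M)⁻¹ (cz+d)^k F(Mz)`. -/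
def stroke (Γ : Subgroup SL2Z) (k : ℝ) (v : Γ → ℂ) (F : ℂ → ℂ) (M : Γ) (z : ℂ) : ℂ :=
  (v M)⁻¹ * ppow (denom (M : SL2Z) z) k * F (moeb (M : SL2Z) z)

/-- Membership in the space `𝒫`: holomorphic on ℍ with
`|g(z)| < K(|z|^ρ + y^{−σ})` for some positive constants `K, ρ, σ`. -/
def MemP (g : ℂ → ℂ) : Prop :=
  (∀ z : ℂ, 0 < z.im → DifferentiableAt ℂ g z) ∧
  ∃ K ρ σ : ℝ, 0 < K ∧ 0 < ρ ∧ 0 < σ ∧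
    ∀ z : ℂ, 0 < z.im → ‖g z‖ < K * (‖z‖ ^ ρ + z.im ^ (-σ))

/-- A cocycle of weight `−k` with multiplier `v`, with values in `𝒫`. -/
def IsCocycle (Γ : Subgroup SL2Z) (k : ℝ) (v : Γ → ℂ) (ρ : Γ → ℂ → ℂ) : Prop :=
  (∀ M : Γ, MemP (ρ M)) ∧
  ∀ M₁ M₂ : Γ, ∀ z : ℂ, 0 < z.im →
    ρ (M₁ * M₂) z = stroke Γ k v (ρ M₁) M₂ z + ρ M₂ z

/-- Parabolicity of a cocycle `ρ` at a parabolic generator `Q`: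
`ρ_Q = ρ_h ∣ Q − ρ_h` for some `ρ_h ∈ 𝒫`. -/
def IsParabolicAt (Γ : Subgroup SL2Z) (k : ℝ) (v : Γ → ℂ) (ρ : Γ → ℂ → ℂ) (Q : Γ) : Prop :=
  ∃ g : ℂ → ℂ, MemP g ∧ ∀ z : ℂ, 0 < z.im → ρ Q z = stroke Γ k v g Q z - g z

/-- `M = (1 λ; 0 1)`. -/
def IsTranslationOf (M : SL2Z) (lam : ℤ) : Prop :=
  entry M 0 0 = 1 ∧ entry M 0 1 = lam ∧ entry M 1 0 = 0 ∧ entry M 1 1 = 1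


/-! Bol's identity: `(d/dz)ⁿ [(cz+d)ⁿ⁻¹ F(Mz)] = (cz+d)⁻ⁿ⁻¹ F⁽ⁿ⁾(Mz)` on the upper half-plane.
It follows by a two-step induction on `n`: one differentiation of `(cz+d)ⁿ⁺¹ F(Mz)` gives
`(n+1) c (cz+d)ⁿ F(Mz) + (cz+d)ⁿ⁻¹ F'(Mz)`; the case `n + 1` handles the first term, the case `n`
applied to `F'` and one more differentiation handle the second, and the terms in `c` cancel.
For `n = k + 1` the transformation law `(cz+d)ᵏ F(Mz) = v(M) F(z)` turns the identity into the
claim. -/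

open Set
open UpperHalfPlane (upperHalfPlaneSet isOpen_upperHalfPlaneSet)

local notation "ℍₒ" => upperHalfPlaneSet

lemma entry_det {R : Type*} [CommRing R] (M : SL2Z) :
    (entry M 0 0 : R) * entry M 1 1 - entry M 0 1 * entry M 1 0 = 1 := by
  have h : entry M 0 0 * entry M 1 1 - entry M 0 1 * entry M 1 0 = 1 := by
    simpa only [entry, Matrix.det_fin_two] using M.2
  exact_mod_cast congrArg (Int.cast : ℤ → R) h

lemma denom_ne_zero (M : SL2Z) {z : ℂ} (hz : 0 < z.im) : denom M z ≠ 0 := by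
  intro h
  have hc : entry M 1 0 = 0 := by
    have him := congrArg Complex.im h
    simp only [denom, add_im, mul_im, intCast_re, intCast_im, zero_mul, add_zero, zero_im] at him
    exact_mod_cast (mul_eq_zero.mp him).resolve_right hz.ne'
  have hd : entry M 1 1 = 0 := by
    simpa [denom, hc] using h
  simpa [hc, hd] using entry_det (R := ℤ) M

lemma im_moeb (M : SL2Z) (z : ℂ) : (moeb M z).im = z.im / normSq (denom M z) := by
  rw [moeb, div_im, div_sub_div_same]
  congr 1
  simp only [denom, add_im, add_re, mul_im, mul_re, intCast_re, intCast_im]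
  linear_combination z.im * entry_det (R := ℝ) M

lemma im_moeb_pos (M : SL2Z) {z : ℂ} (hz : 0 < z.im) : 0 < (moeb M z).im := by
  rw [im_moeb]
  exact div_pos hz (normSq_pos.mpr (denom_ne_zero M hz))

lemma hasDerivAt_denom (M : SL2Z) (z : ℂ) : HasDerivAt (denom M) (entry M 1 0) z := by
  have h := ((hasDerivAt_id' z).const_mul (entry M 1 0 : ℂ)).add_const (entry M 1 1 : ℂ)
  rwa [mul_one] at h

lemma hasDerivAt_moeb (M : SL2Z) {z : ℂ} (hz : denom M z ≠ 0) :
    HasDerivAt (moeb M) (denom M z ^ (-2 : ℤ)) z := by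
  have hnum := ((hasDerivAt_id' z).const_mul (entry M 0 0 : ℂ)).add_const (entry M 0 1 : ℂ)
  refine (hnum.div (hasDerivAt_denom M z) hz).congr_deriv ?_
  rw [zpow_neg, zpow_ofNat, ← one_div, denom]
  congr 1
  linear_combination entry_det (R := ℂ) M

lemma DifferentiableOn.differentiableAt_moeb {F : ℂ → ℂ} (hF : DifferentiableOn ℂ F ℍₒ)
    (M : SL2Z) {z : ℂ} (hz : 0 < z.im) : DifferentiableAt ℂ F (moeb M z) :=
  hF.differentiableAt (isOpen_upperHalfPlaneSet.mem_nhds (im_moeb_pos M hz))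

lemma hasDerivAt_denom_zpow_mul_comp_moeb (M : SL2Z) (m : ℤ) {F : ℂ → ℂ} {z : ℂ}
    (hz : denom M z ≠ 0) (hF : DifferentiableAt ℂ F (moeb M z)) :
    HasDerivAt (fun y => denom M y ^ m * F (moeb M y))
      (m * entry M 1 0 * denom M z ^ (m - 1) * F (moeb M z) +
        denom M z ^ (m - 2) * deriv F (moeb M z)) z := by
  have hpow := (hasDerivAt_zpow m (denom M z) (Or.inl hz)).comp z (hasDerivAt_denom M z)
  have hcomp := hF.hasDerivAt.comp z (hasDerivAt_moeb M hz)
  refine (hpow.mul hcomp).congr_deriv ?_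
  rw [show m - 2 = m + -2 by ring, zpow_add₀ hz, Function.comp_apply, Function.comp_apply]
  ring

lemma differentiableOn_denom_zpow_mul_comp_moeb (M : SL2Z) (m : ℤ) {F : ℂ → ℂ}
    (hF : DifferentiableOn ℂ F ℍₒ) :
    DifferentiableOn ℂ (fun y => denom M y ^ m * F (moeb M y)) ℍₒ := fun _ hz =>
  (hasDerivAt_denom_zpow_mul_comp_moeb M m (denom_ne_zero M hz)
    (hF.differentiableAt_moeb M hz)).differentiableAt.differentiableWithinAt

lemma DifferentiableOn.iteratedDeriv {s : Set ℂ} {F : ℂ → ℂ} (hF : DifferentiableOn ℂ F s)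
    (hs : IsOpen s) (n : ℕ) : DifferentiableOn ℂ (iteratedDeriv n F) s := by
  induction n with
  | zero => simpa
  | succ n ih => simpa only [iteratedDeriv_succ] using ih.deriv hs

theorem iteratedDeriv_denom_zpow_mul_comp_moeb (M : SL2Z) (n : ℕ) {F : ℂ → ℂ}
    (hF : DifferentiableOn ℂ F ℍₒ) :
    EqOn (iteratedDeriv n fun z => denom M z ^ ((n : ℤ) - 1) * F (moeb M z))
      (fun z => denom M z ^ (-(n : ℤ) - 1) * iteratedDeriv n F (moeb M z)) ℍₒ := by
  induction n using Nat.twoStepInduction generalizing F with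
  | zero => intro z _; simp
  | one =>
    intro z hz
    have h := hasDerivAt_denom_zpow_mul_comp_moeb M 0 (denom_ne_zero M hz)
      (hF.differentiableAt_moeb M hz)
    simp only [iteratedDeriv_one, Nat.cast_one, sub_self, h.deriv]
    norm_num
  | more n ih₀ ih₁ =>
    intro z hz
    let g₁ := fun y => denom M y ^ (((n + 1 : ℕ) : ℤ) - 1) * F (moeb M y)
    let g₂ := fun y => denom M y ^ ((n : ℤ) - 1) * deriv F (moeb M y)
    have hderiv : EqOn (deriv fun y => denom M y ^ (((n + 2 : ℕ) : ℤ) - 1) * F (moeb M y))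
        (fun y => ((n + 1) * (entry M 1 0 : ℂ)) * g₁ y + g₂ y) ℍₒ := by
      intro y hy
      rw [(hasDerivAt_denom_zpow_mul_comp_moeb M _ (denom_ne_zero M hy)
        (hF.differentiableAt_moeb M hy)).deriv]
      simp only [g₁, g₂]
      push_cast
      ring_nf
    have hopen := isOpen_upperHalfPlaneSet
    have hg₁ : ContDiffAt ℂ (n + 1) g₁ z :=
      ((differentiableOn_denom_zpow_mul_comp_moeb M _ hF).contDiffOn hopen).contDiffAt
        (hopen.mem_nhds hz)
    have hg₂ : ContDiffAt ℂ (n + 1) g₂ z :=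
      ((differentiableOn_denom_zpow_mul_comp_moeb M _ (hF.deriv hopen)).contDiffOn
        hopen).contDiffAt (hopen.mem_nhds hz)
    calc _ = iteratedDeriv (n + 1) (fun y => ((n + 1) * (entry M 1 0 : ℂ)) * g₁ y + g₂ y) z := by
          rw [iteratedDeriv_succ']
          exact hderiv.iteratedDeriv_of_isOpen hopen (n + 1) hz
      _ = (n + 1) * (entry M 1 0 : ℂ) * iteratedDeriv (n + 1) g₁ z +
            deriv (iteratedDeriv n g₂) z := by
          rw [iteratedDeriv_fun_add (contDiffAt_const.mul hg₁) hg₂, iteratedDeriv_const_mul_field,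
            iteratedDeriv_succ (f := g₂)]
      _ = (n + 1) * (entry M 1 0 : ℂ) *
              (denom M z ^ (-((n + 1 : ℕ) : ℤ) - 1) * iteratedDeriv (n + 1) F (moeb M z)) +
            deriv (fun y => denom M y ^ (-(n : ℤ) - 1) * iteratedDeriv (n + 1) F (moeb M y)) z := by
          rw [ih₁ hF hz, (ih₀ (hF.deriv hopen)).deriv hopen hz]
          simp only [iteratedDeriv_succ']
      _ = _ := by
          rw [(hasDerivAt_denom_zpow_mul_comp_moeb M _ (denom_ne_zero M hz)
            ((hF.iteratedDeriv hopen (n + 1)).differentiableAt_moeb M hz)).deriv,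
            ← iteratedDeriv_succ]
          push_cast
          ring_nf

theorem iteratedDeriv_of_weight_neg_k_is_weight_k_add_two_general
    (Γ : Subgroup SL2Z)
    (k : ℕ) (v : Γ → ℂ)
    (F : ℂ → ℂ)
    (hF : ∀ z : ℂ, 0 < z.im → DifferentiableAt ℂ F z)
    (htrans : ∀ M : Γ, ∀ z : ℂ, 0 < z.im →
      F (moeb (M : SL2Z) z) = v M * (denom (M : SL2Z) z) ^ (-(k : ℤ)) * F z) :
    ∀ M : Γ, ∀ z : ℂ, 0 < z.im →
      iteratedDeriv (k + 1) F (moeb (M : SL2Z) z) =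
        v M * (denom (M : SL2Z) z) ^ ((k : ℤ) + 2) * iteratedDeriv (k + 1) F z := by
  intro M z hz
  have hw := denom_ne_zero (M : SL2Z) hz
  have hlaw : EqOn (fun y => denom M y ^ (((k + 1 : ℕ) : ℤ) - 1) * F (moeb M y))
      (fun y => v M * F y) ℍₒ := by
    intro y hy
    have := denom_ne_zero (M : SL2Z) hy
    simp only [htrans M y hy, Nat.cast_add, Nat.cast_one, add_sub_cancel_right, zpow_neg]
    field_simp
  have hbol := iteratedDeriv_denom_zpow_mul_comp_moeb M (k + 1)
    (fun y hy => (hF y hy).differentiableWithinAt) hz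
  rw [hlaw.iteratedDeriv_of_isOpen isOpen_upperHalfPlaneSet (k + 1) hz,
    iteratedDeriv_const_mul_field] at hbol
  rw [mul_right_comm, hbol, mul_right_comm, ← zpow_add₀ hw,
    show -((k + 1 : ℕ) : ℤ) - 1 + (k + 2) = 0 by push_cast; ring, zpow_zero, one_mul]

/-- If `F ∈ {Γ, −k, v}` (integer `k ≥ 0`), then its `(k+1)`-st
derivative lies in `{Γ, k+2, v}`. -/
theorem iteratedDeriv_of_weight_neg_k_is_weight_k_add_two
    (Γ : Subgroup SL2Z) (hΓ : Γ.FiniteIndex)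
    (k : ℕ) (v : Γ → ℂ)
    (hv0 : ∀ M : Γ, v M ≠ 0)
    (hvmul : ∀ M₁ M₂ : Γ, v (M₁ * M₂) = v M₁ * v M₂)
    (F : ℂ → ℂ)
    (hF : ∀ z : ℂ, 0 < z.im → DifferentiableAt ℂ F z)
    (htrans : ∀ M : Γ, ∀ z : ℂ, 0 < z.im →
      F (moeb (M : SL2Z) z) = v M * (denom (M : SL2Z) z) ^ (-(k : ℤ)) * F z) :
    ∀ M : Γ, ∀ z : ℂ, 0 < z.im →
      iteratedDeriv (k + 1) F (moeb (M : SL2Z) z) =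
        v M * (denom (M : SL2Z) z) ^ ((k : ℤ) + 2) * iteratedDeriv (k + 1) F z :=
  iteratedDeriv_of_weight_neg_k_is_weight_k_add_two_general Γ k v F hF htrans
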